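/- The operators Q_κ^0 and Q_κ^1, for 0 ≤ κ ≤ 2n, form a Hermitian orthonormal family with respect to the Hilbert–Schmidt inner product: each Q_κ^a is Hermitian, and Tr(Q_κ^a Q_{κ′}^b) = δ_{κκ′} δ_{ab} for all 0 ≤ κ, κ′ ≤ 2n and a, b ∈ {0, 1}. -/

import Mathlib

/-!
Distinct Majoranas anticommute and each squares to `1`, so reversing the product `c^s` costs the
sign `(-1)^C(|s|,2)`; since the `c_μ` are Hermitian, `(c^s)ᴴ = (-1)^C(|s|,2) c^s` and
`tr (c^s c^s) = (-1)^C(|s|,2) 2^n`. For `s ≠ t` some `c_μ` anticommutes with `c^s c^t` (this uses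
that there is an even number `2n` of Majoranas), so `tr (c^s c^t) = 0`. Hence the tensors
`c^s ⊗ c^t` are orthogonal for the trace pairing: `Q_κ^a` and `Q_κ'^b` only pair through common
terms, there are none between `Q^0` and `Q^1` because `s ≠ sᶜ`, and for `Q_κ^1` the phase
`(-i)^n i^(κ mod 2)` cancels the sign `(-1)^(C(κ,2) + C(2n-κ,2)) = (-1)^(n+κ)`.
-/

open Matrix Complex
open scoped Kronecker

noncomputable section

abbrev QIdx (n : ℕ) := Fin n → Fin 2
abbrev NMat (n : ℕ) := Matrix (QIdx n) (QIdx n) ℂ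
abbrev NMat2 (n : ℕ) := Matrix (QIdx n × QIdx n) (QIdx n × QIdx n) ℂ

/-- The 2×2 Pauli X matrix. -/
def σX : Matrix (Fin 2) (Fin 2) ℂ := !![0, 1; 1, 0]
/-- The 2×2 Pauli Y matrix. -/
def σY : Matrix (Fin 2) (Fin 2) ℂ := !![0, -Complex.I; Complex.I, 0]
/-- The 2×2 Pauli Z matrix. -/
def σZ : Matrix (Fin 2) (Fin 2) ℂ := !![1, 0; 0, -1]

/-- Tensor (Kronecker) product of `n` one-qubit matrices, realized on index type `Fin n → Fin 2`. -/
def tensor {n : ℕ} (M : Fin n → Matrix (Fin 2) (Fin 2) ℂ) : NMat n :=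
  Matrix.of fun f g => ∏ i, M i (f i) (g i)

/-- The Jordan–Wigner Majorana operator `c_μ` (0-based index: `c_{2i} = Z^{⊗i} X I…`,
`c_{2i+1} = Z^{⊗i} Y I…`). -/
def majorana (n : ℕ) (μ : Fin (2 * n)) : NMat n :=
  tensor fun j =>
    if (j : ℕ) < (μ : ℕ) / 2 then σZ
    else if (j : ℕ) = (μ : ℕ) / 2 then (if (μ : ℕ) % 2 = 0 then σX else σY)
    else 1

/-- Ordered product `c^s` of the Majorana operators indexed by a subset `s`. -/
def cProd (n : ℕ) (s : Finset (Fin (2 * n))) : NMat n :=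
  ((s.sort (· ≤ ·)).map (majorana n)).prod

/-- The module `B_κ`: the complex span of products of `κ` distinct Majoranas. -/
def Bspace (n κ : ℕ) : Submodule ℂ (NMat n) :=
  Submodule.span ℂ {M | ∃ s : Finset (Fin (2 * n)), s.card = κ ∧ M = cProd n s}

/-- The Pauli string with `Z` on qubit `j` and identity elsewhere. -/
def pauliZ (n : ℕ) (j : Fin n) : NMat n := tensor fun k => if k = j then σZ else 1

/-- The Pauli string with `X` on qubits `j` and `j+1` and identity elsewhere. -/
def pauliXX (n : ℕ) (j : Fin n) : NMat n :=
  tensor fun k => if (k : ℕ) = (j : ℕ) ∨ (k : ℕ) = (j : ℕ) + 1 then σX else 1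

/-- The parity operator `P = Z^{⊗n}`. -/
def parity (n : ℕ) : NMat n := tensor fun _ => σZ


/-- Normalization constant `(d √C(2n,κ))⁻¹` with `d = 2^n`. -/
def Qnorm (n κ : ℕ) : ℂ := ((2 ^ n : ℂ) * ((Real.sqrt (Nat.choose (2 * n) κ) : ℝ) : ℂ))⁻¹

/-- The quadratic symmetry `Q_κ^0 = (d √C(2n,κ))⁻¹ Σ_{|s|=κ} c^s ⊗ c^s`. -/
def Q0 (n κ : ℕ) : NMat2 n :=
  Qnorm n κ • ∑ s ∈ Finset.powersetCard κ (Finset.univ : Finset (Fin (2 * n))),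
    (cProd n s) ⊗ₖ (cProd n s)

/-- The sum of the (1-based) elements of `s`, i.e. `π(s)`. -/
def piSum (n : ℕ) (s : Finset (Fin (2 * n))) : ℕ := ∑ μ ∈ s, ((μ : ℕ) + 1)

/-- The quadratic symmetry
`Q_κ^1 = (d √C(2n,κ))⁻¹ (−i)^n i^{κ mod 2} Σ_{|s|=κ} (−1)^{π(s)} c^s ⊗ c^{s̄}`. -/
def Q1 (n κ : ℕ) : NMat2 n :=
  (Qnorm n κ * (-Complex.I) ^ n * Complex.I ^ (κ % 2)) •
    ∑ s ∈ Finset.powersetCard κ (Finset.univ : Finset (Fin (2 * n))),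
      ((-1 : ℂ)) ^ (piSum n s) • ((cProd n s) ⊗ₖ (cProd n sᶜ))

/-- The matchgate circuit generators `{Z_j} ∪ {X_j X_{j+1}}`. -/
def matchgateGens (n : ℕ) : Set (NMat n) :=
  {M | ∃ j : Fin n, M = pauliZ n j} ∪
  {M | ∃ j : Fin n, (j : ℕ) + 1 < n ∧ M = pauliXX n j}

/-- The two-copy representation `H ⊗ I + I ⊗ H` of a generator `H`. -/
def bigH (n : ℕ) (H : NMat n) : NMat2 n :=
  H ⊗ₖ (1 : NMat n) + (1 : NMat n) ⊗ₖ H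

open scoped Finset

section Signs

theorem Nat.choose_two_add (a b : ℕ) :
    (a + b).choose 2 = a.choose 2 + b.choose 2 + a * b := by
  induction b with
  | zero => simp
  | succ b ih =>
    rw [← add_assoc, Nat.choose_succ_succ', Nat.choose_succ_succ' b, ih, Nat.choose_one_right,
      Nat.choose_one_right]
    ring

variable {R : Type*} [Ring R]

theorem neg_one_pow_mul_self (k : ℕ) : (-1 : R) ^ k * (-1) ^ k = 1 := by
  rw [← pow_add, ← two_mul, pow_mul, neg_one_sq, one_pow]

theorem neg_one_pow_choose_two_add_choose_two {a b n : ℕ} (h : a + b = 2 * n) :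
    (-1 : R) ^ (a.choose 2 + b.choose 2) = (-1) ^ (n + a) := by
  have hsum := Nat.choose_two_add a b
  rw [h, two_mul, Nat.choose_two_add] at hsum
  have hpar : Even (a.choose 2 + b.choose 2 + a * b + n) := by
    rw [← hsum]
    simp [parity_simps]
  have hab : Even (a + b) := h ▸ even_two_mul n
  have heven : Even (a.choose 2 + b.choose 2 + (n + a)) := by
    simp only [Nat.even_add, Nat.even_mul] at hpar hab ⊢
    tauto
  rw [neg_one_pow_eq_pow_mod_two, neg_one_pow_eq_pow_mod_two (n + a)]
  rw [Nat.even_iff] at heven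
  congr 1
  omega

end Signs

section Anticommuting

variable {ι R A : Type*} [CommRing R] [Ring A] [Algebra R A] {c : ι → A}

theorem mul_prod_map_of_anticommute [DecidableEq ι]
    (hc : ∀ i j, i ≠ j → c i * c j = -(c j * c i)) (i : ι) (l : List ι) :
    c i * (l.map c).prod = (-1 : R) ^ l.countP (· ≠ i) • ((l.map c).prod * c i) := by
  induction l with
  | nil => simp
  | cons a l ih =>
    rw [List.map_cons, List.prod_cons]
    by_cases ha : a = i
    · subst ha
      calc c a * (c a * (l.map c).prod)
          = c a * ((-1 : R) ^ l.countP (· ≠ a) • ((l.map c).prod * c a)) := by rw [ih]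
        _ = _ := by simp [mul_assoc]
    · calc c i * (c a * (l.map c).prod)
          = -(c a * (c i * (l.map c).prod)) := by
            rw [← mul_assoc, hc i a (Ne.symm ha), neg_mul, mul_assoc]
        _ = _ := by
            rw [ih, List.countP_cons_of_pos (by simpa using ha), pow_succ, mul_neg_one, neg_smul,
              mul_smul_comm, mul_assoc]

theorem prod_map_reverse_of_anticommute (hc : ∀ i j, i ≠ j → c i * c j = -(c j * c i))
    {l : List ι} (hl : l.Nodup) :
    (l.reverse.map c).prod = (-1 : R) ^ l.length.choose 2 • (l.map c).prod := by
  classical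
  induction l with
  | nil => simp
  | cons a l ih =>
    obtain ⟨ha, hl⟩ := List.nodup_cons.mp hl
    have hswap : (l.map c).prod * c a = (-1 : R) ^ l.length • (c a * (l.map c).prod) := by
      rw [mul_prod_map_of_anticommute (R := R) hc, List.countP_eq_length.mpr
        (fun b hb => by simpa using ne_of_mem_of_not_mem hb ha), smul_smul,
        neg_one_pow_mul_self, one_smul]
    simp only [List.reverse_cons, List.map_append, List.prod_append, List.map_cons, List.map_nil,
      List.prod_cons, List.prod_nil, mul_one, List.length_cons]
    rw [ih hl, smul_mul_assoc, hswap, smul_smul, ← pow_add, Nat.choose_succ_succ',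
      Nat.choose_one_right, add_comm l.length]

theorem prod_map_reverse_mul_prod_map (hc : ∀ i, c i * c i = 1) (l : List ι) :
    (l.reverse.map c).prod * (l.map c).prod = 1 := by
  induction l with
  | nil => simp
  | cons a l ih =>
    simp only [List.reverse_cons, List.map_append, List.prod_append, List.map_cons,
      List.prod_cons, List.map_nil, List.prod_nil, mul_one]
    rw [mul_assoc, ← mul_assoc (c a), hc, one_mul, ih]

theorem prod_map_mul_self_of_anticommute (hsq : ∀ i, c i * c i = 1)
    (hc : ∀ i j, i ≠ j → c i * c j = -(c j * c i)) {l : List ι} (hl : l.Nodup) :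
    (l.map c).prod * (l.map c).prod = (-1 : R) ^ l.length.choose 2 • 1 := by
  have h := prod_map_reverse_mul_prod_map hsq l
  rw [prod_map_reverse_of_anticommute (R := R) hc hl, smul_mul_assoc] at h
  rw [← h, smul_smul, neg_one_pow_mul_self, one_smul]

end Anticommuting

theorem star_prod_map_of_isSelfAdjoint {ι A : Type*} [Monoid A] [StarMul A] {c : ι → A}
    (hc : ∀ i, IsSelfAdjoint (c i)) (l : List ι) :
    star (l.map c).prod = (l.reverse.map c).prod := by
  induction l with
  | nil => simp
  | cons a l ih =>
    simp [star_mul, ih, (hc a).star_eq]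

theorem Finset.countP_sort_ne {α : Type*} [LinearOrder α] (s : Finset α) (a : α) :
    (s.sort (· ≤ ·)).countP (· ≠ a) = #(s.erase a) := by
  rw [← Finset.filter_ne', Finset.card_def, Finset.filter_val, ← Multiset.countP_eq_card_filter,
    ← Multiset.coe_countP, Finset.sort_eq]

/-- A Majorana `c_i` anticommutes with `c^s c^t` exactly when this count is odd. -/
theorem Finset.exists_odd_card_erase_add_card_erase {ι : Type*} [Fintype ι] [DecidableEq ι]
    (hι : Even (Fintype.card ι)) {s t : Finset ι} (hst : s ≠ t) :
    ∃ i, Odd (#(s.erase i) + #(t.erase i)) := by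
  have hcard : ∀ (u : Finset ι) i, #(u.erase i) + (if i ∈ u then 1 else 0) = #u := by
    intro u i
    split_ifs with h
    · exact Finset.card_erase_add_one h
    · rw [Finset.erase_eq_of_notMem h, add_zero]
  suffices ∃ i, (#s + #t + (if i ∈ s then 1 else 0) + (if i ∈ t then 1 else 0)) % 2 = 1 by
    obtain ⟨i, hi⟩ := this
    refine ⟨i, Nat.odd_iff.mpr ?_⟩
    have := hcard s i
    have := hcard t i
    omega
  by_cases hpar : (#s + #t) % 2 = 0
  · obtain ⟨i, hi⟩ : ∃ i, ¬(i ∈ s ↔ i ∈ t) := by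
      by_contra! h
      exact hst (Finset.ext h)
    refine ⟨i, ?_⟩
    split_ifs <;> first | omega | tauto
  · obtain ⟨i, hi⟩ : ∃ i, (i ∈ s ↔ i ∈ t) := by
      by_contra! h
      have hts : t = sᶜ := Finset.ext fun i => by
        rw [Finset.mem_compl]
        have := h i
        tauto
      rw [hts, Finset.card_compl] at hpar
      have := Finset.card_le_univ s
      have := Nat.even_iff.mp hι
      omega
    refine ⟨i, ?_⟩
    split_ifs <;> first | omega | tauto

theorem Matrix.trace_eq_zero_of_mul_mul_eq_neg {m R : Type*} [Fintype m] [DecidableEq m]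
    [CommRing R] [IsAddTorsionFree R] {u X : Matrix m m R} (hu : u * u = 1)
    (h : u * X * u = -X) : trace X = 0 := by
  have : trace X = -trace X := by
    rw [← trace_neg, ← h, trace_mul_cycle, hu, one_mul]
  exact self_eq_neg.mp this

theorem Matrix.trace_kronecker_mul_kronecker {m R : Type*} [Fintype m] [CommSemiring R]
    (A B C D : Matrix m m R) :
    trace ((A ⊗ₖ B) * (C ⊗ₖ D)) = trace (A * C) * trace (B * D) := by
  rw [← mul_kronecker_mul, trace_kronecker]

theorem Matrix.trace_smul_sum_mul_smul_sum {m ι R : Type*} [Fintype m] [DecidableEq ι]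
    [CommSemiring R] (a b : R) {S T : Finset ι} (E F : ι → Matrix m m R)
    (h : ∀ i ∈ S, ∀ j ∈ T, i ≠ j → trace (E i * F j) = 0) :
    trace ((a • ∑ i ∈ S, E i) * (b • ∑ j ∈ T, F j)) =
      a * b * ∑ i ∈ S ∩ T, trace (E i * F i) := by
  rw [smul_mul_smul_comm, trace_smul, Finset.sum_mul_sum, trace_sum, smul_eq_mul,
    ← Finset.filter_mem_eq_inter, Finset.sum_filter]
  congr 1
  refine Finset.sum_congr rfl fun i hi => ?_
  rw [trace_sum, ← Finset.sum_ite_eq T i fun j => trace (E i * F j)]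
  refine Finset.sum_congr rfl fun j hj => ?_
  split_ifs with hij
  · rfl
  · exact h i hi j hj hij

section Tensor

variable {n : ℕ}

theorem tensor_mul (M N : Fin n → Matrix (Fin 2) (Fin 2) ℂ) :
    tensor M * tensor N = tensor fun i => M i * N i := by
  ext f g
  simp only [tensor, mul_apply, of_apply, ← Finset.prod_mul_distrib]
  rw [Finset.prod_univ_sum, Fintype.piFinset_univ]

theorem tensor_one : tensor (fun _ : Fin n => (1 : Matrix (Fin 2) (Fin 2) ℂ)) = 1 := by
  ext f g
  simp only [tensor, of_apply, one_apply]
  split_ifs with h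
  · simp [h]
  · obtain ⟨i, hi⟩ := Function.ne_iff.mp h
    exact Finset.prod_eq_zero (Finset.mem_univ i) (if_neg hi)

theorem conjTranspose_tensor (M : Fin n → Matrix (Fin 2) (Fin 2) ℂ) :
    (tensor M)ᴴ = tensor fun i => (M i)ᴴ := by
  ext f g
  simp [tensor, conjTranspose_apply]

theorem tensor_mul_tensor_eq_neg {M N : Fin n → Matrix (Fin 2) (Fin 2) ℂ} (j₀ : Fin n)
    (h₀ : M j₀ * N j₀ = -(N j₀ * M j₀)) (h : ∀ j ≠ j₀, Commute (M j) (N j)) :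
    tensor M * tensor N = -(tensor N * tensor M) := by
  rw [tensor_mul, tensor_mul]
  ext f g
  rw [neg_apply]
  simp only [tensor, of_apply]
  rw [← Finset.mul_prod_erase _ _ (Finset.mem_univ j₀),
    ← Finset.mul_prod_erase _ _ (Finset.mem_univ j₀), h₀, neg_apply, neg_mul,
    Finset.prod_congr rfl fun j hj => by rw [(h j (Finset.ne_of_mem_erase hj)).eq]]

end Tensor

section Majorana

def jwFactor (μ j : ℕ) : Matrix (Fin 2) (Fin 2) ℂ :=
  if j < μ / 2 then σZ else if j = μ / 2 then (if μ % 2 = 0 then σX else σY) else 1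

theorem jwFactor_mul_self (μ j : ℕ) : jwFactor μ j * jwFactor μ j = 1 := by
  unfold jwFactor
  split_ifs <;> simp [σX, σY, σZ, one_fin_two]

theorem isHermitian_jwFactor (μ j : ℕ) : (jwFactor μ j).IsHermitian := by
  unfold jwFactor
  split_ifs <;> (try exact isHermitian_one) <;>
    (ext a b; fin_cases a <;> fin_cases b <;> simp [σX, σY, σZ])

theorem jwFactor_anticommute {μ ν : ℕ} (h : μ < ν) :
    jwFactor μ (μ / 2) * jwFactor ν (μ / 2) =
      -(jwFactor ν (μ / 2) * jwFactor μ (μ / 2)) := by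
  unfold jwFactor
  split_ifs <;> first | omega | simp [σX, σY, σZ]

theorem jwFactor_commute {μ ν j : ℕ} (h : μ ≤ ν) (hj : j ≠ μ / 2) :
    Commute (jwFactor μ j) (jwFactor ν j) := by
  rcases hj.lt_or_gt with hlt | hgt
  · have : j < ν / 2 := hlt.trans_le (Nat.div_le_div_right h)
    simp only [jwFactor, if_pos hlt, if_pos this]
    exact Commute.refl σZ
  · have : jwFactor μ j = 1 := by simp [jwFactor, hgt.not_gt, hgt.ne']
    rw [this]
    exact Commute.one_left _

variable {n : ℕ}

theorem majorana_eq_tensor (μ : Fin (2 * n)) :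
    majorana n μ = tensor fun j => jwFactor μ j := rfl

theorem majorana_mul_self (μ : Fin (2 * n)) : majorana n μ * majorana n μ = 1 := by
  simp only [majorana_eq_tensor, tensor_mul, jwFactor_mul_self, tensor_one]

theorem isSelfAdjoint_majorana (μ : Fin (2 * n)) : IsSelfAdjoint (majorana n μ) := by
  rw [IsSelfAdjoint, star_eq_conjTranspose, majorana_eq_tensor, conjTranspose_tensor]
  simp only [(isHermitian_jwFactor _ _).eq]

theorem majorana_anticommute_of_lt {μ ν : Fin (2 * n)} (h : μ < ν) :
    majorana n μ * majorana n ν = -(majorana n ν * majorana n μ) :=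
  tensor_mul_tensor_eq_neg ⟨μ / 2, by omega⟩ (jwFactor_anticommute h)
    fun j hj => jwFactor_commute h.le fun e => hj (Fin.ext e)

theorem majorana_anticommute {μ ν : Fin (2 * n)} (h : μ ≠ ν) :
    majorana n μ * majorana n ν = -(majorana n ν * majorana n μ) := by
  rcases h.lt_or_gt with h | h
  · exact majorana_anticommute_of_lt h
  · rw [majorana_anticommute_of_lt h, neg_neg]

end Majorana

section MajoranaMonomials

variable {n : ℕ}

theorem majorana_mul_cProd (μ : Fin (2 * n)) (s : Finset (Fin (2 * n))) :
    majorana n μ * cProd n s = (-1 : ℂ) ^ #(s.erase μ) • (cProd n s * majorana n μ) := by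
  rw [cProd, mul_prod_map_of_anticommute (R := ℂ) (fun _ _ => majorana_anticommute),
    Finset.countP_sort_ne]

theorem cProd_mul_self (s : Finset (Fin (2 * n))) :
    cProd n s * cProd n s = (-1 : ℂ) ^ (#s).choose 2 • 1 := by
  rw [cProd, prod_map_mul_self_of_anticommute (R := ℂ) majorana_mul_self
    (fun _ _ => majorana_anticommute) (s.sort_nodup _), Finset.length_sort]

theorem conjTranspose_cProd (s : Finset (Fin (2 * n))) :
    (cProd n s)ᴴ = (-1 : ℂ) ^ (#s).choose 2 • cProd n s := by
  rw [← star_eq_conjTranspose, cProd, star_prod_map_of_isSelfAdjoint isSelfAdjoint_majorana,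
    prod_map_reverse_of_anticommute (R := ℂ) (fun _ _ => majorana_anticommute) (s.sort_nodup _),
    Finset.length_sort]

theorem trace_cProd_mul_self (s : Finset (Fin (2 * n))) :
    trace (cProd n s * cProd n s) = (-1) ^ (#s).choose 2 * 2 ^ n := by
  rw [cProd_mul_self, trace_smul, trace_one, smul_eq_mul]
  simp

theorem trace_cProd_mul_cProd_of_ne {s t : Finset (Fin (2 * n))} (hst : s ≠ t) :
    trace (cProd n s * cProd n t) = 0 := by
  obtain ⟨μ, hμ⟩ := Finset.exists_odd_card_erase_add_card_erase (by simp) hst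
  refine trace_eq_zero_of_mul_mul_eq_neg (majorana_mul_self μ) ?_
  calc majorana n μ * (cProd n s * cProd n t) * majorana n μ
      = (majorana n μ * cProd n s) * (cProd n t * majorana n μ) := by simp only [mul_assoc]
    _ = (-1 : ℂ) ^ #(s.erase μ) •
          (cProd n s * (majorana n μ * cProd n t) * majorana n μ) := by
        rw [majorana_mul_cProd, smul_mul_assoc]
        simp only [mul_assoc]
    _ = (-1 : ℂ) ^ (#(s.erase μ) + #(t.erase μ)) •
          (cProd n s * cProd n t * (majorana n μ * majorana n μ)) := by
        rw [majorana_mul_cProd, mul_smul_comm, smul_mul_assoc, smul_smul, ← pow_add]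
        simp only [mul_assoc]
    _ = -(cProd n s * cProd n t) := by
        rw [majorana_mul_self, mul_one, hμ.neg_one_pow, neg_one_smul]

theorem conjTranspose_cProd_kronecker_cProd (s t : Finset (Fin (2 * n))) :
    (cProd n s ⊗ₖ cProd n t)ᴴ =
      (-1 : ℂ) ^ ((#s).choose 2 + (#t).choose 2) • (cProd n s ⊗ₖ cProd n t) := by
  rw [conjTranspose_kronecker, conjTranspose_cProd, conjTranspose_cProd, smul_kronecker,
    kronecker_smul, smul_smul, pow_add]

end MajoranaMonomials

section QuadraticSymmetries

variable {n : ℕ}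

theorem Qnorm_mul_self_mul {κ : ℕ} (hκ : κ ≤ 2 * n) :
    Qnorm n κ * Qnorm n κ * (2 ^ n * 2 ^ n * (2 * n).choose κ) = 1 := by
  have hsqrt : ((Real.sqrt ((2 * n).choose κ) : ℝ) : ℂ) * (Real.sqrt ((2 * n).choose κ) : ℝ)
      = (2 * n).choose κ := by
    rw [← ofReal_mul, Real.mul_self_sqrt (Nat.cast_nonneg _), ofReal_natCast]
  rw [Qnorm, ← mul_inv, mul_mul_mul_comm, hsqrt, inv_mul_cancel₀]
  exact mul_ne_zero (by simp) (Nat.cast_ne_zero.mpr (Nat.choose_pos hκ).ne')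

theorem star_Qnorm (κ : ℕ) : star (Qnorm n κ) = Qnorm n κ := by
  simp [Qnorm]

theorem neg_I_pow_mul_I_pow_mod_two_sq (n k : ℕ) :
    ((-I) ^ n * I ^ (k % 2)) ^ 2 = (-1) ^ (n + k) := by
  rw [mul_pow, ← pow_mul, ← pow_mul, mul_comm n, mul_comm (k % 2), pow_mul, pow_mul, neg_sq,
    I_sq, ← pow_add, neg_one_pow_eq_pow_mod_two, neg_one_pow_eq_pow_mod_two (n + k)]
  congr 1
  omega

theorem star_neg_I_pow_mul_I_pow_mod_two (n k : ℕ) :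
    star ((-I) ^ n * I ^ (k % 2)) = (-1) ^ (n + k) * ((-I) ^ n * I ^ (k % 2)) := by
  simp only [star_mul', star_pow, star_neg, star_def, conj_I]
  rw [neg_pow (-I), neg_pow I, pow_add, neg_one_pow_eq_pow_mod_two k]
  ring

theorem card_compl_of_mem_powersetCard {κ : ℕ} {s : Finset (Fin (2 * n))}
    (hs : s ∈ Finset.powersetCard κ Finset.univ) : #sᶜ = 2 * n - κ := by
  rw [Finset.card_compl, Fintype.card_fin, (Finset.mem_powersetCard.mp hs).2]

theorem isHermitian_Q0 (κ : ℕ) : (Q0 n κ).IsHermitian := by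
  rw [IsHermitian, Q0, conjTranspose_smul, star_Qnorm, conjTranspose_sum]
  congr 1
  refine Finset.sum_congr rfl fun s _ => ?_
  rw [conjTranspose_cProd_kronecker_cProd, ← two_mul, pow_mul, neg_one_sq, one_pow, one_smul]

theorem isHermitian_Q1 {κ : ℕ} (hκ : κ ≤ 2 * n) : (Q1 n κ).IsHermitian := by
  have hterm : ∀ s ∈ Finset.powersetCard κ Finset.univ,
      ((-1 : ℂ) ^ piSum n s • (cProd n s ⊗ₖ cProd n sᶜ))ᴴ
        = (-1 : ℂ) ^ (n + κ) •
          ((-1 : ℂ) ^ piSum n s • (cProd n s ⊗ₖ cProd n sᶜ)) := by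
    intro s hs
    rw [conjTranspose_smul, star_pow, star_neg, star_one, conjTranspose_cProd_kronecker_cProd,
      smul_comm, card_compl_of_mem_powersetCard hs, (Finset.mem_powersetCard.mp hs).2,
      neg_one_pow_choose_two_add_choose_two (n := n) (by omega)]
  have hphase : star (Qnorm n κ * (-I) ^ n * I ^ (κ % 2)) * (-1) ^ (n + κ)
      = Qnorm n κ * (-I) ^ n * I ^ (κ % 2) := by
    rw [mul_assoc (Qnorm n κ), star_mul', star_Qnorm, star_neg_I_pow_mul_I_pow_mod_two]
    linear_combination
      (Qnorm n κ * ((-I) ^ n * I ^ (κ % 2))) * neg_one_pow_mul_self (R := ℂ) (n + κ)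
  rw [IsHermitian, Q1, conjTranspose_smul, conjTranspose_sum, Finset.sum_congr rfl hterm,
    ← Finset.smul_sum, smul_smul, hphase]

theorem trace_cProd_kronecker_cProd_mul_of_ne {s s' t t' : Finset (Fin (2 * n))} (h : s ≠ t) :
    trace ((cProd n s ⊗ₖ cProd n s') * (cProd n t ⊗ₖ cProd n t')) = 0 := by
  rw [trace_kronecker_mul_kronecker, trace_cProd_mul_cProd_of_ne h, zero_mul]

theorem trace_Q0_mul_Q0 {κ κ' : ℕ} (hκ : κ ≤ 2 * n) :
    trace (Q0 n κ * Q0 n κ') = if κ = κ' then 1 else 0 := by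
  rw [Q0, Q0, trace_smul_sum_mul_smul_sum _ _ _ _
    fun s _ t _ h => trace_cProd_kronecker_cProd_mul_of_ne h]
  split_ifs with h
  · subst h
    rw [Finset.inter_self, Finset.sum_congr rfl fun s hs => by
        rw [trace_kronecker_mul_kronecker, trace_cProd_mul_self,
          (Finset.mem_powersetCard.mp hs).2],
      Finset.sum_const, Finset.card_powersetCard, Finset.card_univ, Fintype.card_fin,
      nsmul_eq_mul]
    linear_combination Qnorm_mul_self_mul hκ + (Qnorm n κ * Qnorm n κ * (2 ^ n * 2 ^ n) *
      (2 * n).choose κ) * neg_one_pow_mul_self (R := ℂ) (κ.choose 2)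
  · rw [Finset.disjoint_iff_inter_eq_empty.mp (Finset.pairwise_disjoint_powersetCard _ h),
      Finset.sum_empty, mul_zero]

theorem trace_Q1_mul_Q1 {κ κ' : ℕ} (hκ : κ ≤ 2 * n) :
    trace (Q1 n κ * Q1 n κ') = if κ = κ' then 1 else 0 := by
  rw [Q1, Q1, trace_smul_sum_mul_smul_sum _ _ _ _ fun s _ t _ h => by
    rw [smul_mul_smul_comm, trace_smul, trace_cProd_kronecker_cProd_mul_of_ne h, smul_zero]]
  split_ifs with h
  · subst h
    have hdiag : ∀ s ∈ Finset.powersetCard κ Finset.univ,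
        trace (((-1 : ℂ) ^ piSum n s • (cProd n s ⊗ₖ cProd n sᶜ)) *
          ((-1 : ℂ) ^ piSum n s • (cProd n s ⊗ₖ cProd n sᶜ))) =
          (-1) ^ (n + κ) * (2 ^ n * 2 ^ n) := by
      intro s hs
      rw [smul_mul_smul_comm, trace_smul, trace_kronecker_mul_kronecker, trace_cProd_mul_self,
        trace_cProd_mul_self, neg_one_pow_mul_self, one_smul, card_compl_of_mem_powersetCard hs,
        (Finset.mem_powersetCard.mp hs).2,
        ← neg_one_pow_choose_two_add_choose_two (a := κ) (b := 2 * n - κ) (by omega), pow_add]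
      ring
    rw [Finset.inter_self, Finset.sum_congr rfl hdiag, Finset.sum_const, Finset.card_powersetCard,
      Finset.card_univ, Fintype.card_fin, nsmul_eq_mul]
    linear_combination (Qnorm n κ * Qnorm n κ * (2 * n).choose κ * (2 ^ n * 2 ^ n) *
        (-1) ^ (n + κ)) * neg_I_pow_mul_I_pow_mod_two_sq n κ +
      (Qnorm n κ * Qnorm n κ * (2 * n).choose κ * (2 ^ n * 2 ^ n)) *
        neg_one_pow_mul_self (R := ℂ) (n + κ) + Qnorm_mul_self_mul hκ
  · rw [Finset.disjoint_iff_inter_eq_empty.mp (Finset.pairwise_disjoint_powersetCard _ h),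
      Finset.sum_empty, mul_zero]

theorem trace_Q0_mul_Q1 (hn : 1 ≤ n) (κ κ' : ℕ) : trace (Q0 n κ * Q1 n κ') = 0 := by
  have : Nonempty (Fin (2 * n)) := ⟨⟨0, by omega⟩⟩
  rw [Q0, Q1, trace_smul_sum_mul_smul_sum _ _ _ _ fun s _ t _ h => by
    rw [mul_smul_comm, trace_smul, trace_cProd_kronecker_cProd_mul_of_ne h, smul_zero]]
  refine mul_eq_zero_of_right _ (Finset.sum_eq_zero fun s _ => ?_)
  rw [mul_smul_comm, trace_smul, trace_kronecker_mul_kronecker,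
    trace_cProd_mul_cProd_of_ne ne_compl_self, mul_zero, smul_zero]

end QuadraticSymmetries

/-- The operators `Q_κ^0, Q_κ^1`, `0 ≤ κ ≤ 2n`, form a Hermitian orthonormal family for the
Hilbert–Schmidt inner product. -/
theorem Q_hermitian_orthonormal (n : ℕ) (hn : 1 ≤ n) :
    (∀ κ : ℕ, κ ≤ 2 * n → (Q0 n κ).IsHermitian ∧ (Q1 n κ).IsHermitian)
    ∧ (∀ κ κ' : ℕ, κ ≤ 2 * n → κ' ≤ 2 * n →
        (Matrix.trace (Q0 n κ * Q0 n κ') = if κ = κ' then 1 else 0)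
        ∧ (Matrix.trace (Q1 n κ * Q1 n κ') = if κ = κ' then 1 else 0)
        ∧ Matrix.trace (Q0 n κ * Q1 n κ') = 0
        ∧ Matrix.trace (Q1 n κ * Q0 n κ') = 0) := by
  refine ⟨fun κ hκ => ⟨isHermitian_Q0 κ, isHermitian_Q1 hκ⟩, fun κ κ' hκ _ => ?_⟩
  refine ⟨trace_Q0_mul_Q0 hκ, trace_Q1_mul_Q1 hκ, trace_Q0_mul_Q1 hn κ κ', ?_⟩
  rw [trace_mul_comm]
  exact trace_Q0_mul_Q1 hn κ' κ

end
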